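/- Let W be a finite Coxeter group, I ⊆ S, and x ∈ W. Then the (one-sided) coset W_I x is an ℓ(w₀(I))-regular subgraph of the Bruhat graph, where w₀(I) is the longest element of W_I: every element of W_I x is incident to exactly ℓ(w₀(I)) Bruhat-graph edges within W_I x. -/

import Mathlib

/-!
The Bruhat neighbours of `y` inside `W_I x` are exactly the elements `t y` with `t` a reflection
of `W_I`, so the coset is regular of degree the number of reflections in `W_I`. As `w₀(I)` is the
longest element of `W_I`, every such reflection is a left inversion of `w₀(I)`. By the strong
exchange condition, obtained from Tits' sign representation of `W` on `W × ZMod 2`, the left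
inversions of `w₀(I)` are the `ℓ(w₀(I))` distinct entries of the left inversion sequence of a
reduced word; by the deletion property that word can be taken with letters in `I`, so these
entries all lie in `W_I`.
-/

open CoxeterSystem

variable {B W : Type*} [Group W] {M : CoxeterMatrix B}

/-- A directed edge of the Bruhat graph: `v = t * u` for a reflection `t`, with length increase. -/
def bruhatEdge (cs : CoxeterSystem M W) (u v : W) : Prop :=
  ∃ t : W, cs.IsReflection t ∧ v = t * u ∧ cs.length u < cs.length v

/-- Bruhat order: reflexive-transitive closure of Bruhat edges. -/
def bruhatLE (cs : CoxeterSystem M W) : W → W → Prop :=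
  Relation.ReflTransGen (bruhatEdge cs)

/-- The standard parabolic subgroup generated by the simple reflections indexed by `I`. -/
def parabolic (cs : CoxeterSystem M W) (I : Set B) : Subgroup W :=
  Subgroup.closure (cs.simple '' I)

/-- The parabolic double coset `W_I x W_J`. -/
def doubleCoset (cs : CoxeterSystem M W) (I J : Set B) (x : W) : Set W :=
  {w | ∃ u ∈ parabolic cs I, ∃ v ∈ parabolic cs J, w = u * x * v}

theorem List.even_count_of_getElem_add_eq {α : Type*} [BEq α] (l : List α) (p : ℕ)
    (hl : l.length = 2 * p)
    (hper : ∀ k (hk : k < p), l[k + p]'(by omega) = l[k]'(by omega)) (a : α) :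
    Even (l.count a) := by
  have hdrop : l.drop p = l.take p := by
    refine List.ext_getElem (by simp; omega) fun k _ h₂ => ?_
    simpa only [List.getElem_drop, List.getElem_take, add_comm p k] using
      hper k (by simp at h₂; omega)
  rw [← List.take_append_drop p l, List.count_append, hdrop]
  exact ⟨_, rfl⟩

namespace CoxeterSystem

variable (cs : CoxeterSystem M W)

local prefix:100 "s" => cs.simple
local prefix:100 "π" => cs.wordProd
local prefix:100 "ℓ" => cs.length
local prefix:100 "lis " => cs.leftInvSeq

theorem simple_conj_eq_simple_iff (i : B) (t : W) : s i * t * s i = s i ↔ t = s i := by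
  constructor
  · intro h; simpa [mul_assoc] using congrArg (fun x => s i * x * s i) h
  · rintro rfl; simp

theorem prod_map_reverse_alternatingWord {G : Type*} [Monoid G] (f : B → G) (i j : B) (m : ℕ) :
    ((alternatingWord i j (2 * m)).reverse.map f).prod = (f j * f i) ^ m := by
  induction m with
  | zero => simp [alternatingWord]
  | succ m ih =>
    rw [show 2 * (m + 1) = 2 * m + 1 + 1 by ring, alternatingWord_succ', alternatingWord_succ']
    simp only [Nat.even_add_one, List.reverse_cons, List.map_append, List.prod_append, ih]
    simp [pow_succ, mul_assoc]

section TitsSign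

variable [DecidableEq W]

/-- Tits' action of `s i` on pairs `(t, ε)`, with `t` ranging over all of `W` rather than just
the reflections: conjugate `t` by `s i` and flip `ε` exactly when `t = s i`. -/
def titsSignFun (i : B) (x : W × ZMod 2) : W × ZMod 2 :=
  (s i * x.1 * s i, x.2 + if x.1 = s i then 1 else 0)

theorem titsSignFun_involutive (i : B) : Function.Involutive (cs.titsSignFun i) := by
  rintro ⟨t, e⟩
  simp only [titsSignFun, cs.simple_conj_eq_simple_iff]
  by_cases ht : t = s i <;> simp [ht, mul_assoc, add_assoc, CharTwo.add_self_eq_zero]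

def titsSign (i : B) : Equiv.Perm (W × ZMod 2) :=
  (cs.titsSignFun_involutive i).toPerm

theorem titsSign_apply (i : B) (t : W) (e : ZMod 2) :
    cs.titsSign i (t, e) = (s i * t * s i, e + if t = s i then 1 else 0) := rfl

theorem count_map_conj_simple (i : B) (t : W) (l : List W) :
    (l.map (MulAut.conj (s i))).count t = l.count (s i * t * s i) := by
  conv_lhs => rw [← show MulAut.conj (s i) (s i * t * s i) = t by simp [mul_assoc]]
  exact List.count_map_of_injective _ _ (MulEquiv.injective _) _

theorem prod_map_titsSign_reverse_apply (ω : List B) (t : W) (e : ZMod 2) :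
    (ω.reverse.map cs.titsSign).prod (t, e) =
      ((π ω)⁻¹ * t * π ω, e + ((lis ω).count t : ZMod 2)) := by
  induction ω generalizing t e with
  | nil => simp
  | cons i ω ih =>
    simp only [List.reverse_cons, List.map_append, List.prod_append, List.map_singleton,
      List.prod_singleton, Equiv.Perm.mul_apply, titsSign_apply, ih, wordProd_cons, leftInvSeq,
      List.count_cons, count_map_conj_simple, beq_iff_eq, eq_comm (a := s i)]
    refine Prod.ext (by simp [mul_assoc]) ?_
    push_cast
    ring

theorem even_count_leftInvSeq_alternatingWord (i j : B) (t : W) :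
    Even ((lis (alternatingWord i j (2 * M j i))).count t) := by
  -- the `k`-th entry is `s i * (s j * s i) ^ k`, so the sequence has period `M j i`
  refine List.even_count_of_getElem_add_eq _ (M j i) (by simp) (fun k hk => ?_) t
  rw [getElem_leftInvSeq_alternatingWord cs i j _ _ (by omega),
    getElem_leftInvSeq_alternatingWord cs i j _ _ (by omega), prod_alternatingWord_eq_mul_pow,
    prod_alternatingWord_eq_mul_pow, show (2 * (k + M j i) + 1) / 2 = k + M j i by omega,
    show (2 * k + 1) / 2 = k by omega, pow_add, simple_mul_simple_pow, mul_one]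
  simp

theorem isLiftable_titsSign : M.IsLiftable cs.titsSign := by
  intro i j
  ext ⟨t, e⟩ : 1
  rw [← prod_map_reverse_alternatingWord, prod_map_titsSign_reverse_apply,
    prod_alternatingWord_eq_mul_pow]
  obtain ⟨c, hc⟩ := cs.even_count_leftInvSeq_alternatingWord j i t
  simp [hc, CharTwo.add_self_eq_zero]

def titsRep : W →* Equiv.Perm (W × ZMod 2) :=
  cs.lift ⟨cs.titsSign, cs.isLiftable_titsSign⟩

theorem titsRep_simple (i : B) : cs.titsRep (s i) = cs.titsSign i :=
  cs.lift_apply_simple cs.isLiftable_titsSign i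

theorem titsRep_inv_wordProd_apply (ω : List B) (t : W) (e : ZMod 2) :
    cs.titsRep (π ω)⁻¹ (t, e) =
      ((π ω)⁻¹ * t * π ω, e + ((lis ω).count t : ZMod 2)) := by
  rw [← prod_map_titsSign_reverse_apply, ← wordProd_reverse, wordProd, map_list_prod,
    List.map_map]
  congr
  exact funext cs.titsRep_simple

theorem titsRep_apply (w t : W) (e : ZMod 2) :
    cs.titsRep w (t, e) = (w * t * w⁻¹, e + (cs.titsRep w (t, 0)).2) := by
  obtain ⟨ω, hω⟩ := cs.wordProd_surjective w⁻¹
  rw [← inv_inv w, ← hω, titsRep_inv_wordProd_apply, titsRep_inv_wordProd_apply]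
  simp

theorem titsRep_apply_self {t : W} (ht : cs.IsReflection t) : cs.titsRep t (t, 0) = (t, 1) := by
  obtain ⟨u, i, rfl⟩ := ht
  set d := (cs.titsRep u (s i, 0)).2
  have hu (e : ZMod 2) : cs.titsRep u (s i, e) = (u * s i * u⁻¹, e + d) :=
    cs.titsRep_apply u _ e
  have hinv : cs.titsRep u⁻¹ (u * s i * u⁻¹, 0) = (s i, d) := by
    rw [map_inv, Equiv.Perm.inv_eq_iff_eq, hu, CharTwo.add_self_eq_zero]
  rw [map_mul, map_mul, Equiv.Perm.mul_apply, Equiv.Perm.mul_apply, hinv, titsRep_simple,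
    titsSign_apply, if_pos rfl, simple_mul_simple_self, one_mul, hu, add_right_comm,
    CharTwo.add_self_eq_zero, zero_add]

end TitsSign

theorem mem_leftInvSeq_of_isLeftInversion {ω : List B} {t : W}
    (ht : cs.IsLeftInversion (π ω) t) : t ∈ lis ω := by
  classical
  obtain ⟨ω', hω', hω'eq⟩ := cs.exists_isReduced (t * π ω)
  have hnot : t ∉ lis ω' := fun hmem => by
    have := (cs.isLeftInversion_of_mem_leftInvSeq hω' hmem).2
    rw [← hω'eq, ← mul_assoc, ht.1.mul_self, one_mul] at this
    exact lt_asymm this ht.2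
  have hsplit : (π ω)⁻¹ = (π ω')⁻¹ * t := by
    rw [← hω'eq, mul_inv_rev, ht.1.inv, mul_assoc, ht.1.mul_self, mul_one]
  -- via `titsRep (π ω)⁻¹ = titsRep (π ω')⁻¹ * titsRep t`, the parity of `t` in `lis ω` is `1`
  have hparity := congrArg Prod.snd (cs.titsRep_inv_wordProd_apply ω t 0)
  rw [hsplit, map_mul, Equiv.Perm.mul_apply, titsRep_apply_self cs ht.1,
    titsRep_inv_wordProd_apply, List.count_eq_zero_of_not_mem hnot] at hparity
  by_contra hmem
  rw [List.count_eq_zero_of_not_mem hmem] at hparity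
  simp at hparity

theorem exists_isReduced_wordProd_eq_simple_mul {ω : List B} (hω : cs.IsReduced ω) (i : B) :
    ∃ ω' : List B, cs.IsReduced ω' ∧ π ω' = s i * π ω ∧ ω' ⊆ i :: ω := by
  rcases cs.length_simple_mul (π ω) i with hlen | hlen
  · refine ⟨i :: ω, ?_, cs.wordProd_cons i ω, List.Subset.refl _⟩
    rw [IsReduced, wordProd_cons, hlen, hω.eq, List.length_cons]
  · have hinv : cs.IsLeftInversion (π ω) (s i) := ⟨cs.isReflection_simple i, by omega⟩
    obtain ⟨k, hk, hki⟩ := List.mem_iff_getElem.mp (cs.mem_leftInvSeq_of_isLeftInversion hinv)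
    have herase : π (ω.eraseIdx k) = s i * π ω := by
      rw [← getD_leftInvSeq_mul_wordProd, List.getD_eq_getElem _ _ hk, hki]
    rw [length_leftInvSeq] at hk
    refine ⟨ω.eraseIdx k, ?_, herase,
      fun j hj => List.mem_cons_of_mem i (List.mem_of_mem_eraseIdx hj)⟩
    rw [IsReduced, herase, List.length_eraseIdx_of_lt hk, ← hω.eq]
    omega

variable {cs} in
theorem simple_mem_parabolic {I : Set B} {i : B} (hi : i ∈ I) : s i ∈ parabolic cs I :=
  Subgroup.subset_closure ⟨i, hi, rfl⟩

theorem wordProd_mem_parabolic {I : Set B} {ω : List B} (hω : ∀ i ∈ ω, i ∈ I) :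
    π ω ∈ parabolic cs I := by
  refine Subgroup.list_prod_mem _ fun _ hw => ?_
  obtain ⟨i, hi, rfl⟩ := List.mem_map.mp hw
  exact simple_mem_parabolic (hω i hi)

theorem mem_parabolic_of_mem_leftInvSeq {I : Set B} {ω : List B} (hω : ∀ i ∈ ω, i ∈ I)
    {t : W} (ht : t ∈ lis ω) : t ∈ parabolic cs I := by
  obtain ⟨k, hk, rfl⟩ := List.mem_iff_getElem.mp ht
  rw [length_leftInvSeq] at hk
  have htake : π (ω.take k) ∈ parabolic cs I :=
    cs.wordProd_mem_parabolic fun i hi => hω i (List.mem_of_mem_take hi)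
  rw [getElem_leftInvSeq _ _ _ hk]
  exact mul_mem (mul_mem htake (simple_mem_parabolic (hω _ (List.getElem_mem hk))))
    (inv_mem htake)

theorem exists_isReduced_of_mem_parabolic {I : Set B} {w : W} (hw : w ∈ parabolic cs I) :
    ∃ ω : List B, cs.IsReduced ω ∧ π ω = w ∧ ∀ i ∈ ω, i ∈ I := by
  have step {i : B} (hi : i ∈ I) {w : W} :
      (∃ ω : List B, cs.IsReduced ω ∧ π ω = w ∧ ∀ i ∈ ω, i ∈ I) →
        ∃ ω : List B, cs.IsReduced ω ∧ π ω = s i * w ∧ ∀ i ∈ ω, i ∈ I := by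
    rintro ⟨ω, hω, rfl, hωI⟩
    obtain ⟨ω', hω', hprod, hsub⟩ := cs.exists_isReduced_wordProd_eq_simple_mul hω i
    refine ⟨ω', hω', hprod, fun j hj => ?_⟩
    rcases List.mem_cons.mp (hsub hj) with rfl | hj
    exacts [hi, hωI j hj]
  induction hw using Subgroup.closure_induction_left with
  | one => exact ⟨[], by simp [IsReduced], rfl, by simp⟩
  | mul_left _ hx _ _ ih =>
    obtain ⟨i, hi, rfl⟩ := hx
    exact step hi ih
  | inv_mul_cancel _ hx _ _ ih =>
    obtain ⟨i, hi, rfl⟩ := hx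
    rw [inv_simple]
    exact step hi ih

theorem ncard_reflections_parabolic_eq_length {I : Set B} {w₀ : W}
    (hmem : w₀ ∈ parabolic cs I) (hlong : ∀ u ∈ parabolic cs I, ℓ u ≤ ℓ w₀) :
    {t | cs.IsReflection t ∧ t ∈ parabolic cs I}.ncard = ℓ w₀ := by
  classical
  obtain ⟨ω, hω, rfl, hωI⟩ := cs.exists_isReduced_of_mem_parabolic hmem
  have hrefl : {t | cs.IsReflection t ∧ t ∈ parabolic cs I} = (lis ω).toFinset := by
    ext t
    simp only [Set.mem_ofPred_eq, List.coe_toFinset]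
    refine ⟨fun ⟨ht, htI⟩ => cs.mem_leftInvSeq_of_isLeftInversion ⟨ht, ?_⟩,
      fun ht => ⟨cs.isReflection_of_mem_leftInvSeq ω ht,
        cs.mem_parabolic_of_mem_leftInvSeq hωI ht⟩⟩
    exact (hlong _ (mul_mem htI hmem)).lt_of_ne (ht.length_mul_right_ne _)
  rw [hrefl, Set.ncard_coe_finset, List.toFinset_card_of_nodup hω.nodup_leftInvSeq,
    length_leftInvSeq, hω.eq]

end CoxeterSystem

theorem bruhatEdge_or_bruhatEdge_iff (cs : CoxeterSystem M W) {y z : W} :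
    bruhatEdge cs y z ∨ bruhatEdge cs z y ↔ ∃ t, cs.IsReflection t ∧ z = t * y := by
  constructor
  · rintro (⟨t, ht, rfl, -⟩ | ⟨t, ht, rfl, -⟩)
    exacts [⟨t, ht, rfl⟩, ⟨t, ht, by rw [← mul_assoc, ht.mul_self, one_mul]⟩]
  · rintro ⟨t, ht, rfl⟩
    rcases (ht.length_mul_right_ne y).lt_or_gt with hlt | hgt
    · exact Or.inr ⟨t, ht, by rw [← mul_assoc, ht.mul_self, one_mul], hlt⟩
    · exact Or.inl ⟨t, ht, rfl, hgt⟩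

theorem bruhat_neighbors_in_coset_eq_image (cs : CoxeterSystem M W) (H : Subgroup W) {x y : W}
    (hy : y ∈ {z : W | ∃ u ∈ H, z = u * x}) :
    {z ∈ {z : W | ∃ u ∈ H, z = u * x} | bruhatEdge cs y z ∨ bruhatEdge cs z y} =
      (· * y) '' {t | cs.IsReflection t ∧ t ∈ H} := by
  obtain ⟨u, hu, rfl⟩ := hy
  ext z
  simp only [Set.mem_ofPred_eq, Set.mem_image, bruhatEdge_or_bruhatEdge_iff]
  constructor
  · rintro ⟨⟨v, hv, rfl⟩, t, ht, htv⟩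
    refine ⟨t, ⟨ht, ?_⟩, htv.symm⟩
    rw [show t = v * u⁻¹ by rw [eq_mul_inv_of_mul_eq htv.symm]; group]
    exact mul_mem hv (inv_mem hu)
  · rintro ⟨t, ⟨ht, htH⟩, rfl⟩
    exact ⟨⟨t * u, mul_mem htH hu, by group⟩, t, ht, rfl⟩

theorem coset_regular_general
    (cs : CoxeterSystem M W) (I : Set B) (x : W) (w₀I : W)
    (hmem : w₀I ∈ parabolic cs I)
    (hlong : ∀ u ∈ parabolic cs I, cs.length u ≤ cs.length w₀I) :
    ∀ y ∈ {z : W | ∃ u ∈ parabolic cs I, z = u * x},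
      Set.ncard {z ∈ {z : W | ∃ u ∈ parabolic cs I, z = u * x} |
          bruhatEdge cs y z ∨ bruhatEdge cs z y} = cs.length w₀I := by
  intro y hy
  rw [bruhat_neighbors_in_coset_eq_image cs _ hy,
    Set.ncard_image_of_injective _ (mul_left_injective y),
    cs.ncard_reflections_parabolic_eq_length hmem hlong]

/-- A one-sided coset `W_I x` is `ℓ(w₀(I))`-regular as a Bruhat graph. -/
theorem coset_regular [Finite W]
    (cs : CoxeterSystem M W) (I : Set B) (x : W) (w₀I : W)
    (hmem : w₀I ∈ parabolic cs I)
    (hlong : ∀ u ∈ parabolic cs I, cs.length u ≤ cs.length w₀I) :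
    ∀ y ∈ {z : W | ∃ u ∈ parabolic cs I, z = u * x},
      Set.ncard {z ∈ {z : W | ∃ u ∈ parabolic cs I, z = u * x} |
          bruhatEdge cs y z ∨ bruhatEdge cs z y} = cs.length w₀I :=
  coset_regular_general cs I x w₀I hmem hlong
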